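/- arXiv:cs/0108020 — 3 statements merged into one kernel-verified Lean document; each statement's English description precedes it below -/
import Mathlib

section
/- Let S be a nonempty set of facets of the unit d-cube with X(S) + Y(S) = d. Then Y(S) ≥ 1, and the union U(S) is homotopy equivalent to the unit sphere of Y(S)-dimensional Euclidean space (that is, to a sphere of dimension Y(S) − 1). -/
/-- The unit `d`-cube `[0,1]^d` in `ℝ^d`. -/
def cube (d : ℕ) : Set (Fin d → ℝ) := {x | ∀ i, 0 ≤ x i ∧ x i ≤ 1}

/-- The facet of the unit `d`-cube on which coordinate `i` equals `0` (if `b = false`)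
or `1` (if `b = true`). -/
def facet (d : ℕ) (i : Fin d) (b : Bool) : Set (Fin d → ℝ) :=
  {x ∈ cube d | x i = if b then 1 else 0}

/-- The union of the facets in a set `S` of facets. -/
def facetUnion (d : ℕ) (S : Set (Fin d × Bool)) : Set (Fin d → ℝ) :=
  ⋃ p ∈ S, facet d p.1 p.2

/-- `X(S)`: the number of opposite facet pairs eXcluded from `S`. -/
noncomputable def Xcount (d : ℕ) (S : Set (Fin d × Bool)) : ℕ :=
  {i : Fin d | (i, false) ∉ S ∧ (i, true) ∉ S}.ncard

/-- `Y(S)`: the number of opposite facet pairs Yncluded in `S`. -/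
noncomputable def Ycount (d : ℕ) (S : Set (Fin d × Bool)) : ℕ :=
  {i : Fin d | (i, false) ∈ S ∧ (i, true) ∈ S}.ncard

/-!
If `X(S) + Y(S) = d`, every coordinate direction contributes either both or neither of its
facets, so `S = B × Bool` for the set `B` of the `Y(S)` full directions. In the sup norm the cube
is the closed ball of radius `1/2` about `(1/2, …, 1/2)`, and `U(S)` splits as
(sup-norm sphere in the `B` coordinates) × (closed ball in the remaining coordinates). The ball is
convex, hence contractible, and radial projection identifies the sup-norm sphere with the
Euclidean one.
-/

open Metric

section RadialProjection

variable {E F : Type*} [NormedAddCommGroup E] [NormedSpace ℝ E]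
  [NormedAddCommGroup F] [NormedSpace ℝ F]

lemma norm_div_norm_smul {v : E} (hv : v ≠ 0) {a : ℝ} (ha : 0 ≤ a) :
    ‖(a / ‖v‖) • v‖ = a := by
  rw [norm_smul, Real.norm_of_nonneg (by positivity), div_mul_cancel₀ _ (norm_ne_zero_iff.2 hv)]

lemma div_norm_smul_pos_smul (v : E) {t : ℝ} (ht : 0 < t) (a : ℝ) :
    (a / ‖t • v‖) • t • v = (a / ‖v‖) • v := by
  rw [norm_smul, Real.norm_of_nonneg ht.le, smul_smul, div_mul_eq_div_div_swap,
    div_mul_cancel₀ _ ht.ne']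

lemma div_norm_smul_eq_self {v : E} {a : ℝ} (hv : ‖v‖ = a) (ha : a ≠ 0) :
    (a / ‖v‖) • v = v := by
  rw [hv, div_self ha, one_smul]

lemma ContinuousLinearEquiv.map_sub_ne_zero_of_mem_sphere (L : E ≃L[ℝ] F) {c : E} {r : ℝ}
    (hr : r ≠ 0) (x : sphere c r) : L (x - c) ≠ 0 :=
  L.map_ne_zero_iff.2 (sub_ne_zero.2 (ne_of_mem_sphere x.2 hr))

noncomputable def ContinuousLinearEquiv.sphereHomeomorph (L : E ≃L[ℝ] F) (c : E) {r s : ℝ}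
    (hr : 0 < r) (hs : 0 < s) : sphere c r ≃ₜ sphere (0 : F) s where
  toFun x := ⟨(s / ‖L (x - c)‖) • L (x - c), by
    simpa using norm_div_norm_smul (L.map_sub_ne_zero_of_mem_sphere hr.ne' x) hs.le⟩
  invFun y := ⟨c + (r / ‖L.symm y‖) • L.symm y, by
    simpa using
      norm_div_norm_smul (L.symm.map_ne_zero_iff.2 (ne_zero_of_mem_sphere hs.ne' y)) hr.le⟩
  left_inv x := by
    have hpos : 0 < s / ‖L (x - c)‖ :=
      div_pos hs (norm_pos_iff.2 (L.map_sub_ne_zero_of_mem_sphere hr.ne' x))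
    ext1
    simp only [map_smul, ContinuousLinearEquiv.symm_apply_apply, div_norm_smul_pos_smul _ hpos,
      div_norm_smul_eq_self (mem_sphere_iff_norm.1 x.2) hr.ne', add_sub_cancel]
  right_inv y := by
    have hpos : 0 < r / ‖L.symm y‖ :=
      div_pos hr (norm_pos_iff.2 (L.symm.map_ne_zero_iff.2 (ne_zero_of_mem_sphere hs.ne' y)))
    ext1
    simp only [add_sub_cancel_left, map_smul, ContinuousLinearEquiv.apply_symm_apply,
      div_norm_smul_pos_smul _ hpos, div_norm_smul_eq_self (mem_sphere_zero_iff_norm.1 y.2) hs.ne']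
  continuous_toFun := by
    refine Continuous.subtype_mk ?_ _
    fun_prop (disch := exact fun x ↦
      norm_ne_zero_iff.2 (L.map_sub_ne_zero_of_mem_sphere hr.ne' x))
  continuous_invFun := by
    refine Continuous.subtype_mk ?_ _
    fun_prop (disch := exact fun y ↦
      norm_ne_zero_iff.2 (L.symm.map_ne_zero_iff.2 (ne_zero_of_mem_sphere hs.ne' y)))

end RadialProjection

lemma ContractibleSpace.nonempty_prod_homotopyEquiv (X Y : Type*) [TopologicalSpace X]
    [TopologicalSpace Y] [ContractibleSpace Y] :
    Nonempty (ContinuousMap.HomotopyEquiv (X × Y) X) := by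
  obtain ⟨h⟩ := ContractibleSpace.hequiv_unit Y
  exact ⟨((ContinuousMap.HomotopyEquiv.refl X).prodCongr h).trans
    (Homeomorph.prodUnique X Unit).toHomotopyEquiv⟩

lemma abs_sub_half_le_half_iff {t : ℝ} : |t - 1 / 2| ≤ 1 / 2 ↔ 0 ≤ t ∧ t ≤ 1 := by
  rw [abs_sub_le_iff]
  constructor <;> rintro ⟨h₁, h₂⟩ <;> constructor <;> linarith

lemma abs_sub_half_eq_half_iff {t : ℝ} : |t - 1 / 2| = 1 / 2 ↔ t = 0 ∨ t = 1 := by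
  rw [abs_eq (by norm_num)]
  constructor <;> rintro (h | h) <;> [right; left; right; left] <;> linarith

section HalfBall

variable {ι : Type*} [Fintype ι] {y : ι → ℝ}

lemma mem_closedBall_half_iff :
    y ∈ closedBall (fun _ ↦ 1 / 2) (1 / 2) ↔ ∀ i, 0 ≤ y i ∧ y i ≤ 1 := by
  simp only [mem_closedBall, dist_pi_le_iff (by norm_num : (0 : ℝ) ≤ 1 / 2), Real.dist_eq,
    abs_sub_half_le_half_iff]

lemma mem_sphere_half_iff :
    y ∈ sphere (fun _ ↦ 1 / 2) (1 / 2) ↔ (∀ i, 0 ≤ y i ∧ y i ≤ 1) ∧ ∃ i, y i = 0 ∨ y i = 1 := by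
  simp only [mem_sphere, dist_pi_eq_iff (by norm_num : (0 : ℝ) < 1 / 2), Real.dist_eq,
    abs_sub_half_le_half_iff, abs_sub_half_eq_half_iff, and_comm]

end HalfBall

lemma mem_facetUnion_preimage_fst {d : ℕ} {B : Set (Fin d)} {x : Fin d → ℝ} :
    x ∈ facetUnion d (Prod.fst ⁻¹' B) ↔ x ∈ cube d ∧ ∃ i ∈ B, x i = 0 ∨ x i = 1 := by
  simp only [facetUnion, facet, Set.mem_preimage, Set.mem_iUnion, Set.mem_ofPred_eq, exists_prop,
    Prod.exists, Bool.exists_bool, Bool.false_eq_true, ↓reduceIte]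
  grind

noncomputable def facetUnionPreimageFstHomeomorph {d : ℕ} (B : Set (Fin d))
    [DecidablePred (· ∈ B)] :
    facetUnion d (Prod.fst ⁻¹' B) ≃ₜ
      sphere (fun _ ↦ 1 / 2 : B → ℝ) (1 / 2) ×
        closedBall (fun _ ↦ 1 / 2 : {i // i ∉ B} → ℝ) (1 / 2) :=
  ((Homeomorph.piEquivPiSubtypeProd (· ∈ B) fun _ ↦ ℝ).subtype fun x ↦ by
    rw [mem_facetUnion_preimage_fst, Set.mem_prod, mem_sphere_half_iff, mem_closedBall_half_iff]
    simp only [cube, Set.mem_ofPred_eq, Homeomorph.piEquivPiSubtypeProd_apply, Subtype.forall,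
      Subtype.exists]
    grind).trans (Homeomorph.Set.prod _ _)

section Combinatorics

variable {d : ℕ} {S : Set (Fin d × Bool)}

lemma notMem_and_notMem_or_mem_and_mem (hXY : Xcount d S + Ycount d S = d) (i : Fin d) :
    ((i, false) ∉ S ∧ (i, true) ∉ S) ∨ ((i, false) ∈ S ∧ (i, true) ∈ S) := by
  set A := {i : Fin d | (i, false) ∉ S ∧ (i, true) ∉ S}
  set B := {i : Fin d | (i, false) ∈ S ∧ (i, true) ∈ S}
  have hAB : Disjoint A B := Set.disjoint_left.2 fun _ hA hB ↦ hA.1 hB.1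
  have hcover : A ∪ B = Set.univ := by
    refine Set.eq_of_subset_of_ncard_le (Set.subset_univ _) ?_ Set.finite_univ
    rw [Set.ncard_union_eq hAB, Set.ncard_univ, Nat.card_fin]
    exact hXY.ge
  exact (Set.mem_union _ _ _).1 (hcover ▸ Set.mem_univ i)

lemma eq_preimage_fst_of_Xcount_add_Ycount_eq (hXY : Xcount d S + Ycount d S = d) :
    S = Prod.fst ⁻¹' {i | (i, false) ∈ S ∧ (i, true) ∈ S} := by
  ext ⟨i, b⟩
  rcases notMem_and_notMem_or_mem_and_mem hXY i with h | h <;> cases b <;> simp [h]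

end Combinatorics

theorem facetUnion_homotopyEquiv_sphere (d : ℕ) (S : Set (Fin d × Bool)) (hS : S.Nonempty)
    (hXY : Xcount d S + Ycount d S = d) :
    1 ≤ Ycount d S ∧
    Nonempty (ContinuousMap.HomotopyEquiv ↥(facetUnion d S)
      ↥(Metric.sphere (0 : EuclideanSpace ℝ (Fin (Ycount d S))) 1)) := by
  classical
  set B := {i : Fin d | (i, false) ∈ S ∧ (i, true) ∈ S}
  have hSB : S = Prod.fst ⁻¹' B := eq_preimage_fst_of_Xcount_add_Ycount_eq hXY
  have hB : B.Nonempty := by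
    obtain ⟨⟨i, b⟩, h⟩ := hS
    rw [hSB] at h
    exact ⟨i, h⟩
  refine ⟨(Set.ncard_pos B.toFinite).2 hB, ?_⟩
  have hdim :
      Module.finrank ℝ (B → ℝ) = Module.finrank ℝ (EuclideanSpace ℝ (Fin (Ycount d S))) := by
    rw [Module.finrank_fintype_fun_eq_card, finrank_euclideanSpace_fin, ← Nat.card_eq_fintype_card,
      Nat.card_coe_set_eq]
    rfl
  have : ContractibleSpace (closedBall (fun _ ↦ 1 / 2 : {i // i ∉ B} → ℝ) (1 / 2)) :=
    (convex_closedBall _ _).contractibleSpace (nonempty_closedBall.2 (by norm_num))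
  obtain ⟨P⟩ := ContractibleSpace.nonempty_prod_homotopyEquiv
    (sphere (fun _ ↦ 1 / 2 : B → ℝ) (1 / 2)) (closedBall (fun _ ↦ 1 / 2 : {i // i ∉ B} → ℝ) (1 / 2))
  let U : facetUnion d S ≃ₜ _ := (Homeomorph.setCongr (congrArg (facetUnion d) hSB)).trans
    (facetUnionPreimageFstHomeomorph B)
  let R := (ContinuousLinearEquiv.ofFinrankEq hdim).sphereHomeomorph (fun _ ↦ 1 / 2)
    (by norm_num : (0 : ℝ) < 1 / 2) one_pos
  exact ⟨U.toHomotopyEquiv.trans (P.trans R.toHomotopyEquiv)⟩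
end

section
/- Let S₁, S₂ ⊆ Fin d × Bool encode two sets of facets of the unit d-cube with X(S₁) = X(S₂) and Y(S₁) = Y(S₂). Then there exists a bijective isometry φ of ℝ^d that maps the unit cube Q onto itself and maps the union U(S₁) of the facets in S₁ onto the union U(S₂) of the facets in S₂. -/
noncomputable def cubeSym (d : ℕ) (σ : Equiv.Perm (Fin d)) (ε : Fin d → Bool) :
    (Fin d → ℝ) → (Fin d → ℝ) :=
  fun x i => if ε i then 1 - x (σ i) else x (σ i)

lemma cubeSym_isometry (d : ℕ) (σ : Equiv.Perm (Fin d)) (ε : Fin d → Bool) :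
    Isometry (cubeSym d σ ε) := by
  have h1 : Isometry (fun x : Fin d → ℝ => fun i => x (σ i)) := by
    intro x y
    rw [edist_pi_def, edist_pi_def]
    conv_rhs => rw [show Finset.univ = Finset.univ.image σ from (Finset.image_univ_equiv σ).symm,
      Finset.sup_image]
    rfl
  have h2 : Isometry (fun x : Fin d → ℝ => fun i => if ε i then 1 - x i else x i) := by
    intro x y
    rw [edist_pi_def, edist_pi_def]
    apply Finset.sup_congr rfl
    intro i _
    by_cases h : ε i <;> simp [h, edist_sub_left]
  exact h2.comp h1

lemma cubeSym_bijective (d : ℕ) (σ : Equiv.Perm (Fin d)) (ε : Fin d → Bool) :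
    Function.Bijective (cubeSym d σ ε) := by
  refine Function.bijective_iff_has_inverse.mpr
    ⟨fun y j => if ε (σ.symm j) then 1 - y (σ.symm j) else y (σ.symm j), ?_, ?_⟩
  · intro x; funext j; simp [cubeSym]
    by_cases h : ε (σ.symm j) <;> simp [h]
  · intro y; funext i; simp [cubeSym]
    by_cases h : ε i <;> simp [h]

lemma cubeSym_mem_cube (d : ℕ) (σ : Equiv.Perm (Fin d)) (ε : Fin d → Bool) (x : Fin d → ℝ) :
    cubeSym d σ ε x ∈ cube d ↔ x ∈ cube d := by
  simp only [cube, Set.mem_setOf_eq, cubeSym]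
  constructor
  · intro h j
    have := h (σ.symm j)
    by_cases hε : ε (σ.symm j) <;> simp [hε] at this <;> constructor <;> linarith [this.1, this.2]
  · intro h i
    have := h (σ i)
    by_cases hε : ε i <;> simp [hε] <;> constructor <;> linarith [this.1, this.2]

lemma cubeSym_mem_facet (d : ℕ) (σ : Equiv.Perm (Fin d)) (ε : Fin d → Bool) (x : Fin d → ℝ)
    (i : Fin d) (b : Bool) :
    cubeSym d σ ε x ∈ facet d i b ↔ x ∈ facet d (σ i) (xor b (ε i)) := by
  simp only [facet, Set.mem_setOf_eq, cubeSym_mem_cube]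
  refine and_congr Iff.rfl ?_
  simp only [cubeSym]
  cases b <;> by_cases hε : ε i <;> simp [hε] <;> constructor <;> intro h <;> linarith

open Classical in
noncomputable def cl (d : ℕ) (S : Set (Fin d × Bool)) (i : Fin d) : Fin 3 :=
  if (i, false) ∈ S ∧ (i, true) ∈ S then 2
  else if (i, false) ∉ S ∧ (i, true) ∉ S then 0 else 1

theorem exists_perm_fiber {α β : Type*} [Fintype α] (f g : α → β)
    (h : ∀ k, Nat.card {i // f i = k} = Nat.card {i // g i = k}) :
    ∃ σ : Equiv.Perm α, ∀ i, f (σ i) = g i := by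
  classical
  have fib : ∀ k, {i // g i = k} ≃ {i // f i = k} := fun k =>
    Fintype.equivOfCardEq (by
      have := h k
      simpa [Nat.card_eq_fintype_card] using this.symm)
  refine ⟨(Equiv.sigmaFiberEquiv g).symm.trans
    ((Equiv.sigmaCongrRight fib).trans (Equiv.sigmaFiberEquiv f)), fun i => ?_⟩
  exact (fib (g i) ⟨i, rfl⟩).2

lemma card_cl0 (d : ℕ) (S : Set (Fin d × Bool)) :
    Nat.card {i // cl d S i = 0} = Xcount d S := by
  rw [Xcount, ← Nat.card_coe_set_eq]
  apply Nat.card_congr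
  apply Equiv.subtypeEquivRight
  intro i
  simp only [cl, Set.mem_setOf_eq]
  split_ifs with h1 h2 <;> simp_all <;> decide

lemma card_cl2 (d : ℕ) (S : Set (Fin d × Bool)) :
    Nat.card {i // cl d S i = 2} = Ycount d S := by
  rw [Ycount, ← Nat.card_coe_set_eq]
  apply Nat.card_congr
  apply Equiv.subtypeEquivRight
  intro i
  simp only [cl, Set.mem_setOf_eq]
  split_ifs with h1 h2 <;> simp_all <;> decide

lemma card_cl_sum (d : ℕ) (S : Set (Fin d × Bool)) :
    ∑ k : Fin 3, Nat.card {i // cl d S i = k} = d := by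
  classical
  have := Fintype.card_congr (Equiv.sigmaFiberEquiv (cl d S))
  simp only [Nat.card_eq_fintype_card]
  rw [← Fintype.card_sigma]
  simpa using this

/-- Any two sets of facets of the unit `d`-cube described by the same pair `(X, Y)` have
unions related by a bijective isometry of `ℝ^d` preserving the unit cube. -/
theorem facetUnions_isometric (d : ℕ) (S₁ S₂ : Set (Fin d × Bool))
    (hX : Xcount d S₁ = Xcount d S₂) (hY : Ycount d S₁ = Ycount d S₂) :
    ∃ φ : (Fin d → ℝ) → (Fin d → ℝ),
      Isometry φ ∧ Function.Bijective φ ∧ φ '' cube d = cube d ∧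
        φ '' facetUnion d S₁ = facetUnion d S₂ := by
  classical
  -- matching fiber counts
  have hsum₁ := card_cl_sum d S₁
  have hsum₂ := card_cl_sum d S₂
  have h0 : Nat.card {i // cl d S₁ i = 0} = Nat.card {i // cl d S₂ i = 0} := by
    rw [card_cl0, card_cl0]; exact hX
  have h2 : Nat.card {i // cl d S₁ i = 2} = Nat.card {i // cl d S₂ i = 2} := by
    rw [card_cl2, card_cl2]; exact hY
  have hk : ∀ k, Nat.card {i // cl d S₁ i = k} = Nat.card {i // cl d S₂ i = k} := by
    intro k
    rw [Fin.sum_univ_three] at hsum₁ hsum₂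
    have h1 : Nat.card {i // cl d S₁ i = 1} = Nat.card {i // cl d S₂ i = 1} := by omega
    fin_cases k
    · exact h0
    · exact h1
    · exact h2
  obtain ⟨σ, hσ⟩ := exists_perm_fiber (cl d S₁) (cl d S₂) hk
  set ε : Fin d → Bool := fun i =>
    if ((i, true) ∈ S₂ ↔ (σ i, true) ∈ S₁) then false else true with hε
  have key : ∀ i b, (i, b) ∈ S₂ ↔ (σ i, xor b (ε i)) ∈ S₁ := by
    intro i b
    have hc := hσ i
    by_cases h2f : (i, false) ∈ S₂ <;> by_cases h2t : (i, true) ∈ S₂ <;>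
      by_cases h1f : (σ i, false) ∈ S₁ <;> by_cases h1t : (σ i, true) ∈ S₁ <;>
      simp only [cl, h2f, h2t, h1f, h1t, and_self, not_true_eq_false, not_false_eq_true,
        and_true, and_false, true_and, false_and, if_true, if_false] at hc <;>
      first
        | exact absurd hc (by decide)
        | (cases b <;> simp [hε, h2f, h2t, h1f, h1t])
  refine ⟨cubeSym d σ ε, cubeSym_isometry d σ ε, cubeSym_bijective d σ ε, ?_, ?_⟩
  · have : cube d = cubeSym d σ ε ⁻¹' cube d := by
      ext x; exact (cubeSym_mem_cube d σ ε x).symm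
    nth_rewrite 1 [this]
    rw [Set.image_preimage_eq _ (cubeSym_bijective d σ ε).2]
  · have : facetUnion d S₁ = cubeSym d σ ε ⁻¹' facetUnion d S₂ := by
      ext x
      simp only [facetUnion, Set.mem_preimage, Set.mem_iUnion, exists_prop]
      constructor
      · rintro ⟨⟨j, c⟩, hq, hx⟩
        refine ⟨(σ.symm j, xor c (ε (σ.symm j))), ?_, ?_⟩
        · rw [key]
          simpa [Bool.xor_assoc] using hq
        · rw [cubeSym_mem_facet]
          simpa [Bool.xor_assoc] using hx
      · rintro ⟨⟨i, b⟩, hp, hx⟩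
        rw [cubeSym_mem_facet] at hx
        exact ⟨(σ i, xor b (ε i)), (key i b).mp hp, hx⟩
    rw [this, Set.image_preimage_eq _ (cubeSym_bijective d σ ε).2]
end

section
/- Let r > 0 and 0 < θ < π/4, and for integers i and j define p(i,j) = (r·cos(iθ), r·sin(iθ), j) ∈ ℝ³. Then: (1) the four points p(1,0), p(−1,0), p(2,1), p(−2,1) are coplanar, and the segment from p(1,0) to p(−1,0) is parallel to the segment from p(2,1) to p(−2,1); (2) the four points p(4,0), p(−4,0), p(3,1), p(−3,1) are coplanar, with the segment from p(4,0) to p(−4,0) parallel to that from p(3,1) to p(−3,1); (3) the four points p(1,0), p(4,0), p(2,1), p(3,1) are coplanar, with the segment from p(1,0) to p(4,0) parallel to that from p(2,1) to p(3,1); and (4) symmetrically, the four points p(−1,0), p(−4,0), p(−2,1), p(−3,1) are coplanar, with the segment from p(−1,0) to p(−4,0) parallel to that from p(−2,1) to p(−3,1). Hence the eight points p(±1,0), p(±2,1), p(±3,1), p(±4,0) have all six of their combinatorial faces planar, each a trapezoid. -/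
open Real

lemma copl_aux (a b c d : Fin 3 → ℝ) (k : ℝ) (h : d - c = k • (b - a)) :
    Coplanar ℝ ({a, b, c, d} : Set (Fin 3 → ℝ)) := by
  have hset : ({a, b, c, d} : Set (Fin 3 → ℝ)) = insert d {a, b, c} := by
    ext x; simp; tauto
  rw [hset]
  have hc : c ∈ affineSpan ℝ ({a, b, c} : Set (Fin 3 → ℝ)) :=
    subset_affineSpan ℝ _ (by simp)
  have hdir : k • (b - a) ∈ (affineSpan ℝ ({a, b, c} : Set (Fin 3 → ℝ))).direction := by
    apply Submodule.smul_mem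
    rw [direction_affineSpan]
    have := vsub_mem_vectorSpan ℝ (show b ∈ ({a,b,c} : Set (Fin 3 → ℝ)) by simp)
      (show a ∈ ({a,b,c} : Set (Fin 3 → ℝ)) by simp)
    simpa [vsub_eq_sub] using this
  have hd : d ∈ affineSpan ℝ ({a, b, c} : Set (Fin 3 → ℝ)) := by
    have hd' : d = k • (b - a) +ᵥ c := by
      rw [← h]; simp [vadd_eq_add]
    rw [hd']
    exact AffineSubspace.vadd_mem_of_mem_direction hdir hc
  exact (coplanar_insert_iff_of_mem_affineSpan hd).mpr (coplanar_triple ℝ a b c)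

/-- The cuboid with eight vertices `p(±1,0)`, `p(±2,1)`, `p(±3,1)`, `p(±4,0)`, where
`p(i,j) = (r cos iθ, r sin iθ, j)`, has all six of its combinatorial faces planar,
each a trapezoid. -/
theorem trapezoidal_cuboid (r θ : ℝ) (hr : 0 < r) (hθ₀ : 0 < θ) (hθ₁ : θ < Real.pi / 4)
    (p : ℤ → ℤ → (Fin 3 → ℝ))
    (hp : ∀ i j : ℤ, p i j =
      ![r * Real.cos (i * θ), r * Real.sin (i * θ), (j : ℝ)]) :
    -- (1) face p(1,0), p(−1,0), p(2,1), p(−2,1)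
    (Coplanar ℝ ({p 1 0, p (-1) 0, p 2 1, p (-2) 1} : Set (Fin 3 → ℝ)) ∧
      ∃ c : ℝ, c ≠ 0 ∧ p (-2) 1 - p 2 1 = c • (p (-1) 0 - p 1 0)) ∧
    -- (2) face p(4,0), p(−4,0), p(3,1), p(−3,1)
    (Coplanar ℝ ({p 4 0, p (-4) 0, p 3 1, p (-3) 1} : Set (Fin 3 → ℝ)) ∧
      ∃ c : ℝ, c ≠ 0 ∧ p (-3) 1 - p 3 1 = c • (p (-4) 0 - p 4 0)) ∧
    -- (3) face p(1,0), p(4,0), p(2,1), p(3,1)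
    (Coplanar ℝ ({p 1 0, p 4 0, p 2 1, p 3 1} : Set (Fin 3 → ℝ)) ∧
      ∃ c : ℝ, c ≠ 0 ∧ p 3 1 - p 2 1 = c • (p 4 0 - p 1 0)) ∧
    -- (4) face p(−1,0), p(−4,0), p(−2,1), p(−3,1)
    (Coplanar ℝ ({p (-1) 0, p (-4) 0, p (-2) 1, p (-3) 1} : Set (Fin 3 → ℝ)) ∧
      ∃ c : ℝ, c ≠ 0 ∧ p (-3) 1 - p (-2) 1 = c • (p (-4) 0 - p (-1) 0)) ∧
    -- the two constant-height faces are coplanar as well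
    Coplanar ℝ ({p 1 0, p (-1) 0, p 4 0, p (-4) 0} : Set (Fin 3 → ℝ)) ∧
    Coplanar ℝ ({p 2 1, p (-2) 1, p 3 1, p (-3) 1} : Set (Fin 3 → ℝ)) := by
  have hπ : 0 < Real.pi := Real.pi_pos
  have h4θ : 4 * θ < Real.pi := by linarith
  have hs1 : 0 < Real.sin θ := Real.sin_pos_of_pos_of_lt_pi hθ₀ (by linarith)
  have hs2 : 0 < Real.sin (2 * θ) := Real.sin_pos_of_pos_of_lt_pi (by linarith) (by linarith)
  have hs3 : 0 < Real.sin (3 * θ) := Real.sin_pos_of_pos_of_lt_pi (by linarith) (by linarith)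
  have hs4 : 0 < Real.sin (4 * θ) := Real.sin_pos_of_pos_of_lt_pi (by linarith) (by linarith)
  have hsh : 0 < Real.sin (θ / 2) := Real.sin_pos_of_pos_of_lt_pi (by linarith) (by linarith)
  have hsth : 0 < Real.sin (3 * θ / 2) :=
    Real.sin_pos_of_pos_of_lt_pi (by linarith) (by linarith)
  have hcos : 0 < Real.cos θ := Real.cos_pos_of_mem_Ioo ⟨by linarith, by linarith⟩
  -- product-to-sum facts
  have hcc1 : Real.cos (3 * θ) - Real.cos (2 * θ)
      = -2 * Real.sin (5 * θ / 2) * Real.sin (θ / 2) := by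
    have h := Real.cos_sub_cos (3 * θ) (2 * θ)
    rw [show (3 * θ + 2 * θ) / 2 = 5 * θ / 2 by ring,
      show (3 * θ - 2 * θ) / 2 = θ / 2 by ring] at h
    exact h
  have hcc2 : Real.cos (4 * θ) - Real.cos θ
      = -2 * Real.sin (5 * θ / 2) * Real.sin (3 * θ / 2) := by
    have h := Real.cos_sub_cos (4 * θ) θ
    rw [show (4 * θ + θ) / 2 = 5 * θ / 2 by ring,
      show (4 * θ - θ) / 2 = 3 * θ / 2 by ring] at h
    exact h
  have hss1 : Real.sin (3 * θ) - Real.sin (2 * θ)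
      = 2 * Real.sin (θ / 2) * Real.cos (5 * θ / 2) := by
    have h := Real.sin_sub_sin (3 * θ) (2 * θ)
    rw [show (3 * θ + 2 * θ) / 2 = 5 * θ / 2 by ring,
      show (3 * θ - 2 * θ) / 2 = θ / 2 by ring] at h
    exact h
  have hss2 : Real.sin (4 * θ) - Real.sin θ
      = 2 * Real.sin (3 * θ / 2) * Real.cos (5 * θ / 2) := by
    have h := Real.sin_sub_sin (4 * θ) θ
    rw [show (4 * θ + θ) / 2 = 5 * θ / 2 by ring,
      show (4 * θ - θ) / 2 = 3 * θ / 2 by ring] at h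
    exact h
  have hne1 : Real.sin θ ≠ 0 := ne_of_gt hs1
  have hne2 : Real.sin (2 * θ) ≠ 0 := ne_of_gt hs2
  have hne4 : Real.sin (4 * θ) ≠ 0 := ne_of_gt hs4
  have hne3 : Real.sin (3 * θ / 2) ≠ 0 := ne_of_gt hsth
  -- vector equations
  have e1 : p (-2) 1 - p 2 1 = (2 * Real.cos θ) • (p (-1) 0 - p 1 0) := by
    funext x
    fin_cases x <;>
      simp [hp, Pi.sub_apply, Pi.smul_apply, smul_eq_mul] <;> push_cast
    linear_combination (-2 * r) * Real.sin_two_mul θ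
  have e2 : p (-3) 1 - p 3 1 = (Real.sin (3 * θ) / Real.sin (4 * θ)) • (p (-4) 0 - p 4 0) := by
    funext x
    fin_cases x <;>
      simp [hp, Pi.sub_apply, Pi.smul_apply, smul_eq_mul] <;> push_cast
    rw [div_mul_eq_mul_div, eq_div_iff hne4]; ring
  have e3 : p 3 1 - p 2 1
      = (Real.sin (θ / 2) / Real.sin (3 * θ / 2)) • (p 4 0 - p 1 0) := by
    funext x
    fin_cases x <;>
      simp [hp, Pi.sub_apply, Pi.smul_apply, smul_eq_mul] <;> push_cast <;>
      rw [div_mul_eq_mul_div, eq_div_iff hne3]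
    · linear_combination r * Real.sin (3 * θ / 2) * hcc1 - r * Real.sin (θ / 2) * hcc2
    · linear_combination r * Real.sin (3 * θ / 2) * hss1 - r * Real.sin (θ / 2) * hss2
  have e4 : p (-3) 1 - p (-2) 1
      = (Real.sin (θ / 2) / Real.sin (3 * θ / 2)) • (p (-4) 0 - p (-1) 0) := by
    funext x
    fin_cases x <;>
      simp [hp, Pi.sub_apply, Pi.smul_apply, smul_eq_mul] <;> push_cast <;>
      rw [div_mul_eq_mul_div, eq_div_iff hne3]
    · linear_combination r * Real.sin (3 * θ / 2) * hcc1 - r * Real.sin (θ / 2) * hcc2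
    · linear_combination -(r * Real.sin (3 * θ / 2)) * hss1 + r * Real.sin (θ / 2) * hss2
  have e5 : p (-4) 0 - p 4 0 = (Real.sin (4 * θ) / Real.sin θ) • (p (-1) 0 - p 1 0) := by
    funext x
    fin_cases x <;>
      simp [hp, Pi.sub_apply, Pi.smul_apply, smul_eq_mul] <;> push_cast
    rw [div_mul_eq_mul_div, eq_div_iff hne1]; ring
  have e6 : p (-3) 1 - p 3 1 = (Real.sin (3 * θ) / Real.sin (2 * θ)) • (p (-2) 1 - p 2 1) := by
    funext x
    fin_cases x <;>
      simp [hp, Pi.sub_apply, Pi.smul_apply, smul_eq_mul] <;> push_cast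
    rw [div_mul_eq_mul_div, eq_div_iff hne2]; ring
  refine ⟨⟨copl_aux _ _ _ _ _ e1, 2 * Real.cos θ, by positivity, e1⟩,
    ⟨copl_aux _ _ _ _ _ e2, Real.sin (3 * θ) / Real.sin (4 * θ), by positivity, e2⟩,
    ⟨copl_aux _ _ _ _ _ e3, Real.sin (θ / 2) / Real.sin (3 * θ / 2), by positivity, e3⟩,
    ⟨copl_aux _ _ _ _ _ e4, Real.sin (θ / 2) / Real.sin (3 * θ / 2), by positivity, e4⟩,
    copl_aux _ _ _ _ _ e5, copl_aux _ _ _ _ _ e6⟩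
end
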